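/- There exists a constant b (depending only on q) such that for all real x ≥ 2, ∑_{P prime in A, |P| ≤ x} 1/|P| = log log x + b + O(1/log x), where log denotes the natural logarithm and the implied constant depends only on q. -/

import Mathlib

/-!
The polynomial `X ^ q ^ n - X` is squarefree and is the product of the primes whose degree
divides `n`. Comparing degrees gives `∑_{d ∣ n} d π(d) = q ^ n`, where `π(d)` is the number of
primes of degree `d`, hence `π(n) / q ^ n = 1 / n + O(q ^ (-n / 2))`. Summing over
`n ≤ N = ⌊log x / log q⌋`, the main terms give the harmonic number `H_N = log N + γ + O(1 / N)`,
while the errors form an absolutely convergent series whose tail is geometric. Finally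
`log N = log log x - log log q + O(1 / log x)`.
-/

open Polynomial Finset UniqueFactorizationMonoid
open scoped Classical

noncomputable section

namespace GaoZhao

variable {F : Type} [Field F] [Fintype F] [DecidableEq F]

/-- The monic polynomial `T^n + c_{n-1}T^{n-1} + ⋯ + c_0`; as `c` ranges over `Fin n → F`
these give exactly the monic polynomials of degree `n` in `A = F_q[T]`. -/
def monicOf {n : ℕ} (c : Fin n → F) : F[X] :=
  X ^ n + ∑ i : Fin n, Polynomial.C (c i) * X ^ (i : ℕ)

/-- The quadratic residue symbol `(f/P)` for a prime `P` of `A = F_q[T]`: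
`0` if `P ∣ f`, `1` if `f` is a nonzero square modulo `P`, and `-1` otherwise. -/
def legSym (P f : F[X]) : ℤ :=
  if P ∣ f then 0 else if ∃ r : F[X], P ∣ (r ^ 2 - f) then 1 else -1

/-- `quadChar D f = χ_D(f) = (D/f)`, the quadratic residue symbol extended
multiplicatively in the lower entry (over the monic irreducible factors of `f`,
with multiplicity). -/
def quadChar (D f : F[X]) : ℤ :=
  ((normalizedFactors f).map fun P => legSym P D).prod

/-- The norm `|f| = q^{deg f}` for `f ≠ 0`, and `|0| = 0`. -/
def pnorm (f : F[X]) : ℝ :=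
  if f = 0 then 0 else (Fintype.card F : ℝ) ^ f.natDegree

/-- `X = q^{2g+1}`. -/
def Xcard (F : Type) [Fintype F] (g : ℕ) : ℝ := (Fintype.card F : ℝ) ^ (2 * g + 1)

/-- `ζ_A(2) = (1 - 1/q)⁻¹`. -/
def zq2 (F : Type) [Fintype F] : ℝ := (1 - 1 / (Fintype.card F : ℝ))⁻¹

/-- Sum of a weight over all monic polynomials of degree `n`. -/
def sumMonic {R : Type*} [AddCommMonoid R] (n : ℕ) (w : F[X] → R) : R :=
  ∑ c : Fin n → F, w (monicOf c)

/-- Sum of a weight over the set `H_{2g+1,q}` of monic squarefree polynomials of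
degree `2g+1`. -/
def sumH {R : Type*} [AddCommMonoid R] (g : ℕ) (w : F[X] → R) : R :=
  sumMonic (2 * g + 1) fun D => if Squarefree D then w D else 0

/-- Sum of a weight over the set `P_{2g+1,q}` of monic irreducible polynomials of
degree `2g+1`. -/
def sumP {R : Type*} [AddCommMonoid R] (g : ℕ) (w : F[X] → R) : R :=
  sumMonic (2 * g + 1) fun P => if Irreducible P then w P else 0

/-- `L(1/2, χ_D) = 𝓛(q^{-1/2}, χ_D)`, where `𝓛(u,χ_D) = ∑_{f monic} χ_D(f) u^{deg f}`
is a polynomial in `u` of degree at most `2g`, namely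
`∑_{n=0}^{2g} (∑_{f ∈ M_n} χ_D(f)) uⁿ`. -/
def Lhalf (g : ℕ) (D : F[X]) : ℝ :=
  ∑ n ∈ range (2 * g + 1),
    (sumMonic n fun f => (quadChar D f : ℝ)) / Real.sqrt ((Fintype.card F : ℝ) ^ n)

/-- `𝓛(u, χ_D) = ∑_{n=0}^{2g} (∑_{f ∈ M_n} χ_D(f)) uⁿ`, as a function of a complex
variable `u`. -/
def Lc (g : ℕ) (D : F[X]) (u : ℂ) : ℂ :=
  ∑ n ∈ range (2 * g + 1), (sumMonic n fun f => (quadChar D f : ℂ)) * u ^ n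

/-- `d_A(f)`: the number of monic divisors of `f`. -/
def dA (f : F[X]) : ℕ := Nat.card {d : F[X] // d.Monic ∧ d ∣ f}

/-- `d_{A,k}(f)`: the number of ways of writing `f` as an ordered product of `k`
monic polynomials. -/
def dAk (k : ℕ) (f : F[X]) : ℕ :=
  Nat.card {v : Fin k → F[X] // (∀ i, (v i).Monic) ∧ ∏ i, v i = f}

/-- The set of monic irreducible divisors of `f`. -/
def primeDivisors (f : F[X]) : Finset F[X] := (normalizedFactors f).toFinset

/-- `f = □`: `f` is a perfect square in `A`. -/
def IsSq (f : F[X]) : Prop := ∃ r : F[X], f = r ^ 2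

end GaoZhao

open Real

namespace GaoZhao

section MonicOf

variable {F : Type} [Field F]

theorem coeff_monicOf {n : ℕ} (c : Fin n → F) (i : Fin n) : (monicOf c).coeff i = c i := by
  simp [monicOf, coeff_X_pow, i.is_lt.ne, coeff_C_mul, Fin.val_inj]

theorem monicOf_injective {n : ℕ} : Function.Injective (monicOf (F := F) (n := n)) :=
  fun c d h ↦ funext fun i ↦ by rw [← coeff_monicOf c, ← coeff_monicOf d, h]

theorem monic_monicOf {n : ℕ} (c : Fin n → F) : (monicOf c).Monic :=
  monic_X_pow_add (degree_sum_fin_lt c)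

theorem natDegree_monicOf {n : ℕ} (c : Fin n → F) : (monicOf c).natDegree = n := by
  rw [monicOf, natDegree_add_eq_left_of_degree_lt, natDegree_X_pow]
  simpa using degree_sum_fin_lt c

theorem exists_monicOf_eq {n : ℕ} {f : F[X]} (hf : f.Monic) (hn : f.natDegree = n) :
    ∃ c : Fin n → F, monicOf c = f := by
  subst hn
  refine ⟨fun i ↦ f.coeff i, ?_⟩
  rw [monicOf, Fin.sum_univ_eq_sum_range (fun i ↦ C (f.coeff i) * X ^ i), ← hf.as_sum]

end MonicOf

theorem sum_range_succ_pow_le_two_mul_pow {q : ℕ} (hq : 2 ≤ q) (m : ℕ) :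
    ∑ k ∈ range (m + 1), q ^ k ≤ 2 * q ^ m := by
  induction m with
  | zero => simp
  | succ m ih =>
    rw [sum_range_succ, pow_succ]
    nlinarith [Nat.mul_le_mul_left (q ^ m) hq]

section Counting

variable {F : Type} [Field F] [Fintype F]

variable (F) in
def primesOfDegree (n : ℕ) : Finset F[X] :=
  (univ.image (monicOf (n := n))).filter Irreducible

theorem mem_primesOfDegree {n : ℕ} {P : F[X]} :
    P ∈ primesOfDegree F n ↔ Irreducible P ∧ P.Monic ∧ P.natDegree = n := by
  constructor
  · simp only [primesOfDegree, mem_filter, mem_image, mem_univ, true_and]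
    rintro ⟨⟨c, rfl⟩, hP⟩
    exact ⟨hP, monic_monicOf c, natDegree_monicOf c⟩
  · rintro ⟨hP, hm, hn⟩
    obtain ⟨c, rfl⟩ := exists_monicOf_eq hm hn
    simpa [primesOfDegree] using hP

theorem sumMonic_ite_irreducible {R : Type*} [AddCommMonoid R] (n : ℕ) (w : F[X] → R) :
    (sumMonic n fun P ↦ if Irreducible P then w P else 0) = ∑ P ∈ primesOfDegree F n, w P := by
  rw [primesOfDegree, sum_filter, sum_image fun c _ d _ h ↦ monicOf_injective h, sumMonic]

theorem primesOfDegree_zero : primesOfDegree F 0 = ∅ := by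
  ext P
  simp only [mem_primesOfDegree, notMem_empty, iff_false, not_and]
  intro hP hm hdeg
  exact hP.not_isUnit (by simp [(hm.natDegree_eq_zero).mp hdeg])

theorem normalizedFactors_X_pow_card_pow_sub_X {n : ℕ} (hn : n ≠ 0) :
    (normalizedFactors (X ^ Fintype.card F ^ n - X : F[X])).toFinset =
      n.divisors.biUnion (primesOfDegree F) := by
  ext P
  rw [Multiset.mem_toFinset, Polynomial.mem_normalizedFactors_iff
    (FiniteField.X_pow_card_pow_sub_X_ne_zero F hn Fintype.one_lt_card)]
  simp only [mem_biUnion, mem_primesOfDegree, Nat.mem_divisors]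
  constructor
  · rintro ⟨hP, hm, hdvd⟩
    refine ⟨P.natDegree, ⟨hP.natDegree_dvd_of_dvd_X_pow_card_pow_sub_X ?_, hn⟩, hP, hm, rfl⟩
    rwa [Nat.card_eq_fintype_card]
  · rintro ⟨d, ⟨hd, -⟩, hP, hm, rfl⟩
    refine ⟨hP, hm, ?_⟩
    rwa [← Nat.card_eq_fintype_card, ← hP.natDegree_dvd_iff_dvd_X_pow_card_pow_sub_X]

theorem separable_X_pow_card_pow_sub_X {n : ℕ} (hn : n ≠ 0) :
    (X ^ Fintype.card F ^ n - X : F[X]).Separable := by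
  obtain ⟨p, hp⟩ := CharP.exists F
  have : Fact p.Prime := ⟨CharP.char_is_prime F p⟩
  obtain ⟨m, -, hq⟩ := FiniteField.card F p
  refine galois_poly_separable p _ ?_
  rw [hq, ← pow_mul]
  exact dvd_pow_self p (by positivity)

theorem sum_divisors_mul_card_primesOfDegree {n : ℕ} (hn : n ≠ 0) :
    ∑ d ∈ n.divisors, d * #(primesOfDegree F d) = Fintype.card F ^ n := by
  set S : F[X] := X ^ Fintype.card F ^ n - X
  have hS : S ≠ 0 := FiniteField.X_pow_card_pow_sub_X_ne_zero F hn Fintype.one_lt_card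
  have hnodup : (normalizedFactors S).Nodup :=
    (squarefree_iff_nodup_normalizedFactors hS).mp
      (separable_X_pow_card_pow_sub_X (F := F) hn).squarefree
  calc ∑ d ∈ n.divisors, d * #(primesOfDegree F d)
      = ∑ d ∈ n.divisors, ∑ P ∈ primesOfDegree F d, P.natDegree := by
        refine sum_congr rfl fun d _ ↦ ?_
        rw [sum_congr rfl fun P hP ↦ (mem_primesOfDegree.mp hP).2.2, sum_const, smul_eq_mul,
          mul_comm]
    _ = ∑ P ∈ (normalizedFactors S).toFinset, P.natDegree := by
        rw [normalizedFactors_X_pow_card_pow_sub_X hn, sum_biUnion]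
        intro d _ e _ hde
        refine disjoint_left.mpr fun P hd he ↦ hde ?_
        rw [← (mem_primesOfDegree.mp hd).2.2, ← (mem_primesOfDegree.mp he).2.2]
    _ = ((normalizedFactors S).map natDegree).sum := by
        rw [← Multiset.toFinset_eq hnodup]; rfl
    _ = (normalizedFactors S).prod.natDegree :=
        (natDegree_multiset_prod _ (zero_notMem_normalizedFactors S)).symm
    _ = Fintype.card F ^ n :=
        (natDegree_eq_of_degree_eq (degree_eq_degree_of_associated
          (prod_normalizedFactors hS))).trans
          (FiniteField.X_pow_card_pow_sub_X_natDegree_eq F hn Fintype.one_lt_card)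

theorem mul_card_primesOfDegree_le (n : ℕ) : n * #(primesOfDegree F n) ≤ Fintype.card F ^ n := by
  rcases eq_or_ne n 0 with rfl | hn
  · simp
  rw [← sum_divisors_mul_card_primesOfDegree hn]
  exact single_le_sum (f := fun d ↦ d * #(primesOfDegree F d)) (fun _ _ ↦ Nat.zero_le _)
    (Nat.mem_divisors_self n hn)

theorem pow_le_mul_card_primesOfDegree_add (n : ℕ) :
    Fintype.card F ^ n ≤ n * #(primesOfDegree F n) + 2 * Fintype.card F ^ (n / 2) := by
  rcases eq_or_ne n 0 with rfl | hn
  · simp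
  have hsub : n.properDivisors ⊆ range (n / 2 + 1) := fun d hd ↦ by
    obtain ⟨⟨k, rfl⟩, hlt⟩ := Nat.mem_properDivisors.mp hd
    have hk : 2 ≤ k := by
      by_contra! hk
      interval_cases k <;> simp at hlt
    rw [mem_range, Nat.lt_succ_iff, Nat.le_div_iff_mul_le two_pos]
    exact Nat.mul_le_mul_left d hk
  calc Fintype.card F ^ n
      = n * #(primesOfDegree F n) + ∑ d ∈ n.properDivisors, d * #(primesOfDegree F d) := by
        rw [← sum_divisors_mul_card_primesOfDegree hn, ← Nat.cons_self_properDivisors hn,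
          sum_cons]
    _ ≤ n * #(primesOfDegree F n) + ∑ d ∈ range (n / 2 + 1), Fintype.card F ^ d := by
        gcongr
        exact (sum_le_sum fun d _ ↦ mul_card_primesOfDegree_le d).trans
          (sum_le_sum_of_subset hsub)
    _ ≤ n * #(primesOfDegree F n) + 2 * Fintype.card F ^ (n / 2) := by
        gcongr
        exact sum_range_succ_pow_le_two_mul_pow Fintype.one_lt_card _

theorem abs_card_primesOfDegree_div_sub_inv_le (n : ℕ) :
    |(#(primesOfDegree F n) : ℝ) / (Fintype.card F : ℝ) ^ n - (n : ℝ)⁻¹| ≤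
      2 * (√(Fintype.card F : ℝ))⁻¹ ^ n := by
  rcases eq_or_ne n 0 with rfl | hn
  · simp [primesOfDegree_zero]
  set s := √(Fintype.card F : ℝ)
  have hs : 1 ≤ s := Real.one_le_sqrt.mpr (by exact_mod_cast Fintype.card_pos)
  have hq : (Fintype.card F : ℝ) ^ n = s ^ n * s ^ n := by
    rw [← mul_pow, Real.mul_self_sqrt (Nat.cast_nonneg _)]
  have hhalf : (Fintype.card F : ℝ) ^ (n / 2) ≤ s ^ n := by
    rw [← Real.sq_sqrt (Nat.cast_nonneg (Fintype.card F)), ← pow_mul]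
    exact pow_le_pow_right₀ hs (Nat.mul_div_le n 2)
  have hupper : (n : ℝ) * #(primesOfDegree F n) ≤ s ^ n * s ^ n := by
    rw [← hq]; exact_mod_cast mul_card_primesOfDegree_le n
  have hlower : s ^ n * s ^ n ≤ (n : ℝ) * #(primesOfDegree F n) + 2 * s ^ n := by
    rw [← hq]
    calc (Fintype.card F : ℝ) ^ n
        ≤ (n : ℝ) * #(primesOfDegree F n) + 2 * (Fintype.card F : ℝ) ^ (n / 2) := by
          exact_mod_cast pow_le_mul_card_primesOfDegree_add n
      _ ≤ (n : ℝ) * #(primesOfDegree F n) + 2 * s ^ n := by gcongr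
  have hn1 : (1 : ℝ) ≤ n := by exact_mod_cast Nat.one_le_iff_ne_zero.mpr hn
  have hsn : 0 < s ^ n := by positivity
  rw [hq, inv_pow, abs_sub_le_iff]
  constructor
  · rw [sub_le_iff_le_add, div_le_iff₀ (by positivity)]
    field_simp
    nlinarith
  · rw [sub_le_iff_le_add, ← sub_le_iff_le_add', le_div_iff₀ (by positivity)]
    field_simp
    nlinarith

end Counting

theorem natCast_mul_pow_le {r : ℝ} (h0 : 0 ≤ r) (h1 : r < 1) (N : ℕ) :
    N * r ^ N ≤ r / (1 - r) ^ 2 := by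
  refine le_hasSum (hasSum_coe_mul_geometric_of_norm_lt_one ?_) N fun n _ ↦ by positivity
  rwa [Real.norm_of_nonneg h0]

theorem log_add_one_sub_log_le {x : ℝ} (hx : 0 < x) : log (x + 1) - log x ≤ x⁻¹ := by
  rw [← log_div (by positivity) hx.ne']
  exact (log_le_sub_one_of_pos (by positivity)).trans_eq (by field_simp; ring)

theorem abs_harmonic_sub_log_sub_eulerMascheroniConstant_le {N : ℕ} (hN : N ≠ 0) :
    |harmonic N - log N - eulerMascheroniConstant| ≤ (N : ℝ)⁻¹ := by
  have hlow := eulerMascheroniSeq_lt_eulerMascheroniConstant N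
  have hupp := eulerMascheroniConstant_lt_eulerMascheroniSeq' N
  rw [eulerMascheroniSeq] at hlow
  rw [eulerMascheroniSeq', if_neg hN] at hupp
  have := log_add_one_sub_log_le (x := N) (by positivity)
  rw [abs_le]
  constructor <;> linarith

theorem sum_range_succ_natCast_inv (N : ℕ) : ∑ n ∈ range (N + 1), (n : ℝ)⁻¹ = harmonic N := by
  simp [sum_range_succ', harmonic]

theorem abs_sum_range_succ_sub_tsum_le {e : ℕ → ℝ} {C r : ℝ} (hr0 : 0 ≤ r) (hr1 : r < 1)
    (he : ∀ n, ‖e n‖ ≤ C * r ^ n) {N : ℕ} (hN : N ≠ 0) :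
    |∑ n ∈ range (N + 1), e n - ∑' n, e n| ≤ C * r ^ 2 / (1 - r) ^ 3 / N := by
  have hsum : Summable e := .of_norm_bounded ((summable_geometric_of_lt_one hr0 hr1).mul_left C) he
  have hC : 0 ≤ C := by simpa using (norm_nonneg _).trans (he 0)
  have hr : 0 < 1 - r := sub_pos.mpr hr1
  calc |∑ n ∈ range (N + 1), e n - ∑' n, e n| ≤ C * r ^ (N + 1) / (1 - r) :=
        norm_sub_le_of_geometric_bound_of_hasSum hr1 he hsum.hasSum (N + 1)
    _ = C * r * (N * r ^ N) / (1 - r) / N := by field_simp; ring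
    _ ≤ C * r * (r / (1 - r) ^ 2) / (1 - r) / N := by gcongr; exact natCast_mul_pow_le hr0 hr1 N
    _ = C * r ^ 2 / (1 - r) ^ 3 / N := by field_simp

theorem exists_abs_sum_card_primesOfDegree_div_sub_log_le (F : Type) [Field F] [Fintype F] :
    ∃ b C : ℝ, 0 ≤ C ∧ ∀ N : ℕ, N ≠ 0 →
      |∑ n ∈ range (N + 1), (#(primesOfDegree F n) : ℝ) / (Fintype.card F : ℝ) ^ n
        - log N - b| ≤ C / N := by
  set e : ℕ → ℝ := fun n ↦ (#(primesOfDegree F n) : ℝ) / (Fintype.card F : ℝ) ^ n - (n : ℝ)⁻¹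
  set r := (√(Fintype.card F : ℝ))⁻¹
  have hr0 : 0 < r := by positivity
  have hr1 : r < 1 := inv_lt_one_of_one_lt₀ <|
    Real.lt_sqrt_of_sq_lt (by norm_num; exact_mod_cast Fintype.one_lt_card)
  have he : ∀ n, ‖e n‖ ≤ 2 * r ^ n := abs_card_primesOfDegree_div_sub_inv_le
  refine ⟨eulerMascheroniConstant + ∑' n, e n, 1 + 2 * r ^ 2 / (1 - r) ^ 3,
    by have := sub_pos.mpr hr1; positivity, fun N hN ↦ ?_⟩
  have hsplit : ∑ n ∈ range (N + 1), (#(primesOfDegree F n) : ℝ) / (Fintype.card F : ℝ) ^ n =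
      harmonic N + ∑ n ∈ range (N + 1), e n := by
    rw [← sum_range_succ_natCast_inv, ← sum_add_distrib]
    simp [e]
  calc _ = |(harmonic N - log N - eulerMascheroniConstant) +
        (∑ n ∈ range (N + 1), e n - ∑' n, e n)| := by rw [hsplit]; ring_nf
    _ ≤ (N : ℝ)⁻¹ + 2 * r ^ 2 / (1 - r) ^ 3 / N :=
        (abs_add_le _ _).trans (add_le_add
          (abs_harmonic_sub_log_sub_eulerMascheroniConstant_le hN)
          (abs_sum_range_succ_sub_tsum_le hr0.le hr1 he hN))
    _ = _ := by ring

theorem abs_sub_log_log_le {S : ℕ → ℝ} {a b C : ℝ} (ha : 1 < a) (hC : 0 ≤ C)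
    (hS : ∀ N : ℕ, N ≠ 0 → |S N - log N - b| ≤ C / N) {x : ℝ} (hx : a ≤ x) :
    |S ⌊log x / log a⌋₊ - log (log x) - (b - log (log a))| ≤
      2 * (C + 1) * log a / log x := by
  have hla : 0 < log a := log_pos ha
  have hlx : 0 < log x := log_pos (ha.trans_le hx)
  set L := log x / log a
  have hL : 1 ≤ L := (one_le_div hla).mpr (log_le_log (by linarith) hx)
  set N := ⌊L⌋₊
  have hN1 : (1 : ℝ) ≤ N := by exact_mod_cast (Nat.one_le_floor_iff L).mpr hL
  have hNL : (N : ℝ) ≤ L := Nat.floor_le (by linarith)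
  have hLN : L < N + 1 := Nat.lt_floor_add_one L
  have hlogL : log L = log (log x) - log (log a) := log_div hlx.ne' hla.ne'
  have hlogN : |log N - log L| ≤ (N : ℝ)⁻¹ := by
    have := log_add_one_sub_log_le (x := N) (by linarith)
    have := log_le_log (by linarith) hNL
    have := log_le_log (by linarith) hLN.le
    rw [abs_le]; constructor <;> linarith
  calc _ = |(S N - log N - b) + (log N - log L)| := by rw [hlogL]; ring_nf
    _ ≤ C / N + (N : ℝ)⁻¹ := (abs_add_le _ _).trans
        (add_le_add (hS N (by exact_mod_cast (by linarith : (N : ℝ) ≠ 0))) hlogN)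
    _ = (C + 1) / N := by ring
    _ ≤ (C + 1) / (L / 2) := by gcongr; linarith
    _ = 2 * (C + 1) * log a / log x := by simp only [L]; field_simp

theorem abs_neg_log_log_sub_le {a b x : ℝ} (hx : 2 ≤ x) (hxa : x ≤ a) :
    |-log (log x) - b| ≤ (|b| + |log (log 2)| + |log (log a)|) * log a / log x := by
  have hl2 : 0 < log 2 := log_pos one_lt_two
  have hl2x : log 2 ≤ log x := log_le_log two_pos hx
  have hlxa : log x ≤ log a := log_le_log (by linarith) hxa
  have hloglog : |log (log x)| ≤ |log (log 2)| + |log (log a)| :=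
    (abs_le_max_abs_abs (log_le_log hl2 hl2x) (log_le_log (by linarith) hlxa)).trans
      (max_le_add_of_nonneg (abs_nonneg _) (abs_nonneg _))
  calc |-log (log x) - b| ≤ |log (log x)| + |b| := by
        rw [← abs_neg (log (log x))]; exact abs_sub _ _
    _ ≤ (|b| + |log (log 2)| + |log (log a)|) * 1 := by linarith
    _ ≤ _ := by
        rw [mul_div_assoc]
        gcongr
        exact (one_le_div (by linarith)).mpr hlxa

section NormSum

variable {F : Type} [Field F] [Fintype F] [DecidableEq F]

theorem sumMonic_ite_irreducible_and_pnorm_le (x : ℝ) (n : ℕ) :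
    (sumMonic n fun P : F[X] ↦ if Irreducible P ∧ pnorm P ≤ x then 1 / pnorm P else 0) =
      if (Fintype.card F : ℝ) ^ n ≤ x then
        (#(primesOfDegree F n) : ℝ) / (Fintype.card F : ℝ) ^ n else 0 := by
  have hnorm (c : Fin n → F) : pnorm (monicOf c) = (Fintype.card F : ℝ) ^ n := by
    rw [pnorm, if_neg (monic_monicOf c).ne_zero, natDegree_monicOf]
  calc _ = sumMonic n fun P : F[X] ↦ if Irreducible P then
        (if (Fintype.card F : ℝ) ^ n ≤ x then 1 / (Fintype.card F : ℝ) ^ n else 0) else 0 :=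
        sum_congr rfl fun c _ ↦ by dsimp only; rw [hnorm c, ite_and]
    _ = _ := by
        rw [sumMonic_ite_irreducible, sum_const, nsmul_eq_mul]
        split_ifs <;> simp [div_eq_mul_inv]

theorem sum_range_floor_sumMonic_ite_irreducible_and_pnorm_le {x : ℝ} (hx : 1 ≤ x) :
    ∑ n ∈ range (⌊x⌋₊ + 1), (sumMonic n fun P : F[X] ↦
        if Irreducible P ∧ pnorm P ≤ x then 1 / pnorm P else 0) =
      ∑ n ∈ range (⌊log x / log (Fintype.card F)⌋₊ + 1),
        (#(primesOfDegree F n) : ℝ) / (Fintype.card F : ℝ) ^ n := by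
  have hq : 1 < Fintype.card F := Fintype.one_lt_card
  have hqR : (1 : ℝ) < Fintype.card F := by exact_mod_cast hq
  have hpow (n : ℕ) : (Fintype.card F : ℝ) ^ n ≤ x ↔
      n ∈ range (⌊log x / log (Fintype.card F)⌋₊ + 1) := by
    rw [mem_range, Nat.lt_succ_iff,
      Nat.le_floor_iff (div_nonneg (log_nonneg hx) (log_nonneg hqR.le)),
      le_div_iff₀ (log_pos hqR), Real.pow_le_iff_le_log (by positivity) (by linarith)]
  simp_rw [sumMonic_ite_irreducible_and_pnorm_le, ← sum_filter]
  refine sum_congr (ext fun n ↦ ?_) fun _ _ ↦ rfl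
  rw [mem_filter, ← hpow, mem_range]
  refine and_iff_right_of_imp fun h ↦ Nat.lt_succ_of_le (Nat.le_floor ?_)
  exact le_trans (by exact_mod_cast (Nat.lt_pow_self hq).le) h

end NormSum

/-- Lemma 2.1, Mertens-type estimate \eqref{lam2p}: there is a
constant `b` with `∑_{|P| ≤ x} 1/|P| = log log x + b + O(1/log x)` for `x ≥ 2`. -/
theorem statement5 (F : Type) [Field F] [Fintype F] [DecidableEq F] :
    ∃ b C : ℝ, 0 < C ∧ ∀ x : ℝ, 2 ≤ x →
      |(∑ n ∈ range (⌊x⌋₊ + 1), sumMonic n fun P : F[X] =>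
          if Irreducible P ∧ pnorm P ≤ x then 1 / pnorm P else 0) -
        Real.log (Real.log x) - b| ≤ C / Real.log x := by
  obtain ⟨b, C, hC, hS⟩ := exists_abs_sum_card_primesOfDegree_div_sub_log_le F
  have ha : (1 : ℝ) < Fintype.card F := by exact_mod_cast Fintype.one_lt_card
  set a : ℝ := (Fintype.card F : ℝ)
  have hla : 0 < log a := log_pos ha
  set b' := b - log (log a)
  set M := |b'| + |log (log 2)| + |log (log a)|
  refine ⟨b', 2 * (C + 1) * log a + M * log a,
    add_pos_of_pos_of_nonneg (by positivity) (by positivity), fun x hx ↦ ?_⟩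
  have hlx : 0 < log x := log_pos (by linarith)
  rw [sum_range_floor_sumMonic_ite_irreducible_and_pnorm_le (by linarith)]
  rcases le_or_gt a x with hax | hxa
  · calc _ ≤ 2 * (C + 1) * log a / log x := abs_sub_log_log_le ha hC hS hax
      _ ≤ _ := by gcongr; exact le_add_of_nonneg_right (by positivity)
  · have hN : ⌊log x / log a⌋₊ = 0 :=
      Nat.floor_eq_zero.mpr ((div_lt_one hla).mpr (log_lt_log (by linarith) hxa))
    rw [hN, zero_add, sum_range_one, primesOfDegree_zero, card_empty, Nat.cast_zero, zero_div,
      zero_sub]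
    calc _ ≤ M * log a / log x := abs_neg_log_log_sub_le hx hxa.le
      _ ≤ _ := by gcongr; exact le_add_of_nonneg_left (by positivity)

end GaoZhao
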